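/- For H = (px²+py²+pz²)/2 + k1(x²+y²+4z²) + k2/x² + k3/y² + k4/z² with k4 ≥ 0, the quartic function K_6b = (K_RL1)² + (2k4/z²)(x·px)², where K_RL1 = −px·(z·px−x·pz) + 2k1x²z − 2k2 z/x², satisfies {K_6b, H} = 0. -/

import Mathlib

/-! The Poisson bracket is a derivation in its first argument, so
`{K_RL1² + B, H} = 2 K_RL1 {K_RL1, H} + {B, H}` with `B = (2k4/z²)(x px)²`. A direct computation
from the gradients gives `{K_RL1, H} = 2k4 x px / z³`: only the `k4/z²` part of `H` breaks the
conservation of `K_RL1`. The correction `B` is chosen so that `{B, H} = -2 K_RL1 · 2k4 x px / z³`,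
and the two contributions cancel. -/

noncomputable section

/-- Phase space ℝ⁶ with coordinates (x,y,z,px,py,pz). -/
abbrev Pt := Fin 6 → ℝ

/-- Standard basis vector. -/
def e (j : Fin 6) : Pt := Pi.single j 1

/-- Canonical Poisson bracket on ℝ⁶:
{F,G} = Σᵢ (∂F/∂qᵢ ∂G/∂pᵢ − ∂F/∂pᵢ ∂G/∂qᵢ). -/
def pb (F G : Pt → ℝ) (q : Pt) : ℝ :=
    (fderiv ℝ F q (e 0)) * (fderiv ℝ G q (e 3)) - (fderiv ℝ F q (e 3)) * (fderiv ℝ G q (e 0))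
  + (fderiv ℝ F q (e 1)) * (fderiv ℝ G q (e 4)) - (fderiv ℝ F q (e 4)) * (fderiv ℝ G q (e 1))
  + (fderiv ℝ F q (e 2)) * (fderiv ℝ G q (e 5)) - (fderiv ℝ F q (e 5)) * (fderiv ℝ G q (e 2))

/-- H = (px²+py²+pz²)/2 + k1(x²+y²+4z²) + k2/x² + k3/y² + k4/z². -/
def Ham (k1 k2 k3 k4 : ℝ) (q : Pt) : ℝ :=
  (q 3 ^ 2 + q 4 ^ 2 + q 5 ^ 2) / 2 + k1 * (q 0 ^ 2 + q 1 ^ 2 + 4 * q 2 ^ 2)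
    + k2 / q 0 ^ 2 + k3 / q 1 ^ 2 + k4 / q 2 ^ 2

/-- K_RL1 = −px·(z px − x pz) + 2k1 x² z − 2k2 z/x². -/
def KRL1 (k1 k2 : ℝ) (q : Pt) : ℝ :=
  -(q 3 * (q 2 * q 3 - q 0 * q 5)) + 2 * k1 * q 0 ^ 2 * q 2 - 2 * k2 * q 2 / q 0 ^ 2

/-- K_6b = (K_RL1)² + (2k4/z²)(x px)². -/
def K6b (k1 k2 k4 : ℝ) (q : Pt) : ℝ :=
  (KRL1 k1 k2 q) ^ 2 + (2 * k4 / q 2 ^ 2) * (q 0 * q 3) ^ 2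

open ContinuousLinearMap

section GradForm

variable {ι : Type*} [Fintype ι]

def gradForm (a : ι → ℝ) : (ι → ℝ) →L[ℝ] ℝ := ∑ i, a i • proj i

@[simp]
theorem gradForm_apply (a v : ι → ℝ) : gradForm a v = ∑ i, a i * v i := by
  simp [gradForm]

theorem gradForm_apply_single [DecidableEq ι] (a : ι → ℝ) (j : ι) :
    gradForm a (Pi.single j 1) = a j := by
  simp [Pi.single_apply]

theorem hasFDerivAt_inv_apply_sq {q : ι → ℝ} {i : ι} (hq : q i ≠ 0) :
    HasFDerivAt (fun p : ι → ℝ => (p i ^ 2)⁻¹)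
      ((-2 / q i ^ 3) • (proj i : (ι → ℝ) →L[ℝ] ℝ)) q := by
  refine ((hasDerivAt_inv (pow_ne_zero 2 hq)).comp_hasFDerivAt q
    ((hasFDerivAt_apply (𝕜 := ℝ) i q).pow 2)).congr_fderiv ?_
  ext v
  simp only [Nat.add_one_sub_one, pow_one, nsmul_eq_mul, Nat.cast_ofNat, neg_smul, neg_apply,
    smul_apply, proj_apply, smul_eq_mul]
  field_simp

end GradForm

theorem pb_eq_of_hasFDerivAt {F G : Pt → ℝ} {q a b : Pt}
    (hF : HasFDerivAt F (gradForm a) q) (hG : HasFDerivAt G (gradForm b) q) :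
    pb F G q = a 0 * b 3 - a 3 * b 0 + a 1 * b 4 - a 4 * b 1 + a 2 * b 5 - a 5 * b 2 := by
  simp only [pb, e, hF.fderiv, hG.fderiv, gradForm_apply_single]

theorem pb_sq_add_left {F G H : Pt → ℝ} {q : Pt} (hF : DifferentiableAt ℝ F q)
    (hG : DifferentiableAt ℝ G q) :
    pb (fun p => F p ^ 2 + G p) H q = 2 * F q * pb F H q + pb G H q := by
  rw [pb, pb, pb, ((hF.hasFDerivAt.pow 2).fun_add hG.hasFDerivAt).fderiv]
  simp only [add_apply, smul_apply, smul_eq_mul]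
  ring

theorem hasFDerivAt_Ham (k1 k2 k3 k4 : ℝ) {q : Pt} (hx : q 0 ≠ 0) (hy : q 1 ≠ 0)
    (hz : q 2 ≠ 0) :
    HasFDerivAt (Ham k1 k2 k3 k4)
      (gradForm ![2 * k1 * q 0 - 2 * k2 / q 0 ^ 3, 2 * k1 * q 1 - 2 * k3 / q 1 ^ 3,
        8 * k1 * q 2 - 2 * k4 / q 2 ^ 3, q 3, q 4, q 5]) q := by
  have hp (i : Fin 6) := (hasFDerivAt_apply (𝕜 := ℝ) i q).pow 2
  have : HasFDerivAt (Ham k1 k2 k3 k4) _ q :=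
    (((((((hp 3).fun_add (hp 4)).fun_add (hp 5)).mul_const 2⁻¹).fun_add
      ((((hp 0).fun_add (hp 1)).fun_add ((hp 2).const_mul 4)).const_mul k1)).fun_add
      ((hasFDerivAt_inv_apply_sq hx).const_mul k2)).fun_add
      ((hasFDerivAt_inv_apply_sq hy).const_mul k3)).fun_add
      ((hasFDerivAt_inv_apply_sq hz).const_mul k4)
  refine this.congr_fderiv ?_
  ext v
  simp only [gradForm_apply, Fin.sum_univ_six, Matrix.cons_val, add_apply,
    smul_apply, proj_apply, smul_eq_mul, nsmul_eq_mul]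
  ring

theorem hasFDerivAt_KRL1 (k1 k2 : ℝ) {q : Pt} (hx : q 0 ≠ 0) :
    HasFDerivAt (KRL1 k1 k2)
      (gradForm ![q 3 * q 5 + 4 * k1 * q 0 * q 2 + 4 * k2 * q 2 / q 0 ^ 3, 0,
        -q 3 ^ 2 + 2 * k1 * q 0 ^ 2 - 2 * k2 / q 0 ^ 2, -2 * q 2 * q 3 + q 0 * q 5, 0,
        q 0 * q 3]) q := by
  have hc (i : Fin 6) := hasFDerivAt_apply (𝕜 := ℝ) i q
  have : HasFDerivAt (KRL1 k1 k2) _ q :=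
    ((((hc 3).fun_mul (((hc 2).fun_mul (hc 3)).fun_sub ((hc 0).fun_mul (hc 5)))).fun_neg.fun_add
      ((((hc 0).pow 2).const_mul (2 * k1)).fun_mul (hc 2))).fun_sub
      (((hc 2).const_mul (2 * k2)).fun_mul (hasFDerivAt_inv_apply_sq hx)))
  refine this.congr_fderiv ?_
  ext v
  simp only [gradForm_apply, Fin.sum_univ_six, Matrix.cons_val, add_apply, sub_apply, neg_apply,
    smul_apply, proj_apply, smul_eq_mul, nsmul_eq_mul]
  field_simp
  ring

def K6bCorrection (k4 : ℝ) (q : Pt) : ℝ :=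
  2 * k4 / q 2 ^ 2 * (q 0 * q 3) ^ 2

theorem hasFDerivAt_K6bCorrection (k4 : ℝ) {q : Pt} (hz : q 2 ≠ 0) :
    HasFDerivAt (K6bCorrection k4)
      (gradForm ![4 * k4 * q 0 * q 3 ^ 2 / q 2 ^ 2, 0, -4 * k4 * q 0 ^ 2 * q 3 ^ 2 / q 2 ^ 3,
        4 * k4 * q 0 ^ 2 * q 3 / q 2 ^ 2, 0, 0]) q := by
  have hc (i : Fin 6) := hasFDerivAt_apply (𝕜 := ℝ) i q
  have : HasFDerivAt (K6bCorrection k4) _ q :=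
    ((hasFDerivAt_inv_apply_sq hz).const_mul (2 * k4)).fun_mul (((hc 0).fun_mul (hc 3)).pow 2)
  refine this.congr_fderiv ?_
  ext v
  simp only [gradForm_apply, Fin.sum_univ_six, Matrix.cons_val, add_apply,
    smul_apply, proj_apply, smul_eq_mul, nsmul_eq_mul]
  field_simp
  ring

theorem pb_KRL1_Ham (k1 k2 k3 k4 : ℝ) {q : Pt} (hx : q 0 ≠ 0) (hy : q 1 ≠ 0)
    (hz : q 2 ≠ 0) :
    pb (KRL1 k1 k2) (Ham k1 k2 k3 k4) q = 2 * k4 * q 0 * q 3 / q 2 ^ 3 := by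
  rw [pb_eq_of_hasFDerivAt (hasFDerivAt_KRL1 k1 k2 hx) (hasFDerivAt_Ham k1 k2 k3 k4 hx hy hz)]
  simp only [Matrix.cons_val]
  field_simp
  ring

theorem pb_K6bCorrection_Ham (k1 k2 k3 k4 : ℝ) {q : Pt} (hx : q 0 ≠ 0) (hy : q 1 ≠ 0)
    (hz : q 2 ≠ 0) :
    pb (K6bCorrection k4) (Ham k1 k2 k3 k4) q =
      -(2 * KRL1 k1 k2 q) * (2 * k4 * q 0 * q 3 / q 2 ^ 3) := by
  rw [pb_eq_of_hasFDerivAt (hasFDerivAt_K6bCorrection k4 hz) (hasFDerivAt_Ham k1 k2 k3 k4 hx hy hz)]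
  simp only [KRL1, Matrix.cons_val]
  field_simp
  ring

theorem stmt9_general (k1 k2 k3 k4 : ℝ) :
    ∀ q : Pt, q 0 ≠ 0 → q 1 ≠ 0 → q 2 ≠ 0 →
      pb (K6b k1 k2 k4) (Ham k1 k2 k3 k4) q = 0 := by
  intro q hx hy hz
  change pb (fun p => KRL1 k1 k2 p ^ 2 + K6bCorrection k4 p) _ q = 0
  rw [pb_sq_add_left (hasFDerivAt_KRL1 k1 k2 hx).differentiableAt
      (hasFDerivAt_K6bCorrection k4 hz).differentiableAt,
    pb_KRL1_Ham k1 k2 k3 k4 hx hy hz, pb_K6bCorrection_Ham k1 k2 k3 k4 hx hy hz]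
  ring

theorem stmt9 (k1 k2 k3 k4 : ℝ) (hk4 : k4 ≥ 0) :
    ∀ q : Pt, q 0 ≠ 0 → q 1 ≠ 0 → q 2 ≠ 0 →
      pb (K6b k1 k2 k4) (Ham k1 k2 k3 k4) q = 0 :=
  stmt9_general k1 k2 k3 k4
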